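/- arXiv:2009.03616 — 3 statements merged into one kernel-verified Lean document; each statement's English description precedes it below -/
import Mathlib

section
/- Let x ∈ ℝ^m and X ∈ S^m be such that [[1, x^T],[x, X]] is positive semidefinite, diag(X) = x, ⟨J_m, X⟩ = n², tr(X) = n, and ⟨u_i u_i^T, X⟩ = ⟨v_i v_i^T, X⟩ = 1 for all i ∈ N. If additionally X has all entries nonnegative, then X_{ef} = 0 for every pair (e, f) ∈ Z of distinct arcs that start at the same node or end at the same node. -/
/-!
Fix a node `i` and let `w` be the 0/1 indicator of the arcs leaving (or entering) `i`.
Testing `[[1, xᵀ], [x, X]] ⪰ 0` against `(-1, w)` gives `1 - 2 wᵀx + wᵀXw ≥ 0`, and `wᵀXw = 1`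
forces `wᵀx ≤ 1`. These `n` numbers sum to `tr X = n`, so each equals `1`. Since `w` is 0/1
and `diag X = x`, the diagonal part of `wᵀXw` is `wᵀx = 1 = wᵀXw`; hence the off-diagonal
part, a sum of nonnegative entries `X_{ef}` over pairs of distinct arcs at `i`, vanishes.
-/

open Matrix

noncomputable section

/-- Trace inner product `⟨M, N⟩ = tr(Mᵀ N)` on real matrices. -/
def tip {k l : ℕ} (M N : Matrix (Fin k) (Fin l) ℝ) : ℝ := (Mᵀ * N).trace

/-- The extended matrix `[[1, xᵀ], [x, X]]`, with the top row/column indexed by `0`. -/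
def extM {m : ℕ} (x : Fin m → ℝ) (X : Matrix (Fin m) (Fin m) ℝ) :
    Matrix (Fin (m + 1)) (Fin (m + 1)) ℝ :=
  Matrix.of (Fin.cons (Fin.cons 1 x) (fun i => Fin.cons (x i) (fun j => X i j)))

lemma tip_vecMulVec_self {m : ℕ} (w : Fin m → ℝ) (X : Matrix (Fin m) (Fin m) ℝ) :
    tip (vecMulVec w w) X = w ⬝ᵥ (X *ᵥ w) := by
  rw [tip, transpose_vecMulVec, vecMulVec_mul, trace_vecMulVec, dotProduct_comm,
    dotProduct_mulVec]

lemma extM_quadForm {m : ℕ} (x : Fin m → ℝ) (X : Matrix (Fin m) (Fin m) ℝ) (w : Fin m → ℝ) :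
    star (Fin.cons (-1 : ℝ) w) ⬝ᵥ (extM x X *ᵥ Fin.cons (-1) w) =
      1 - 2 * (w ⬝ᵥ x) + w ⬝ᵥ (X *ᵥ w) := by
  simp only [star_trivial, dotProduct, mulVec, extM, Fin.sum_univ_succ, of_apply,
    Fin.cons_zero, Fin.cons_succ]
  simp only [mul_add, mul_neg, neg_mul, one_mul, mul_one, Finset.sum_add_distrib,
    Finset.sum_neg_distrib, mul_comm (x _) (w _)]
  ring

lemma dotProduct_le_one_of_extM_posSemidef {m : ℕ} {x : Fin m → ℝ}
    {X : Matrix (Fin m) (Fin m) ℝ} (hpsd : (extM x X).PosSemidef) {w : Fin m → ℝ}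
    (hw : w ⬝ᵥ (X *ᵥ w) = 1) : w ⬝ᵥ x ≤ 1 := by
  have := hpsd.dotProduct_mulVec_nonneg (Fin.cons (-1) w)
  rw [extM_quadForm, hw] at this
  linarith

lemma offDiag_eq_zero_of_sum_eq_sum_diag {ι : Type*} [Fintype ι] [DecidableEq ι]
    {T : ι → ι → ℝ} (hT : ∀ a b, 0 ≤ T a b) (h : ∑ a, ∑ b, T a b = ∑ a, T a a)
    {a b : ι} (hab : a ≠ b) : T a b = 0 := by
  have hsplit : ∀ a, ∑ b, T a b = T a a + ∑ b ∈ Finset.univ.erase a, T a b := fun a =>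
    (Finset.add_sum_erase _ _ (Finset.mem_univ a)).symm
  have hoff : ∑ a, ∑ b ∈ Finset.univ.erase a, T a b = 0 := by
    simp only [hsplit, Finset.sum_add_distrib] at h
    linarith
  rw [Finset.sum_eq_zero_iff_of_nonneg fun a _ => Finset.sum_nonneg fun b _ => hT a b] at hoff
  exact (Finset.sum_eq_zero_iff_of_nonneg fun b _ => hT a b).1 (hoff a (Finset.mem_univ a)) b
    (Finset.mem_erase.2 ⟨hab.symm, Finset.mem_univ b⟩)

section FiberIndicators

variable {n m : ℕ} {g : Fin m → Fin n} {u : Fin n → Fin m → ℝ}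
  {x : Fin m → ℝ} {X : Matrix (Fin m) (Fin m) ℝ}

lemma sum_dotProduct_fiberIndicator (hu : ∀ i e, u i e = if g e = i then 1 else 0) :
    ∑ i, u i ⬝ᵥ x = ∑ e, x e := by
  simp only [dotProduct, hu, ite_mul, one_mul, zero_mul]
  rw [Finset.sum_comm]
  simp

lemma fiberIndicator_dotProduct_eq_one (hu : ∀ i e, u i e = if g e = i then 1 else 0)
    (hpsd : (extM x X).PosSemidef) (hdiag : X.diag = x) (htrace : X.trace = (n : ℝ))
    (hq : ∀ i, u i ⬝ᵥ (X *ᵥ u i) = 1) (i : Fin n) : u i ⬝ᵥ x = 1 := by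
  have hle : ∀ j ∈ Finset.univ, u j ⬝ᵥ x ≤ 1 := fun j _ =>
    dotProduct_le_one_of_extM_posSemidef hpsd (hq j)
  have hsum : ∑ j, u j ⬝ᵥ x = ∑ _j : Fin n, (1 : ℝ) := by
    rw [sum_dotProduct_fiberIndicator hu, ← hdiag, ← trace, htrace]
    simp
  exact (Finset.sum_eq_sum_iff_of_le hle).1 hsum i (Finset.mem_univ i)

lemma entry_eq_zero_of_same_fiber (hu : ∀ i e, u i e = if g e = i then 1 else 0)
    (hpsd : (extM x X).PosSemidef) (hdiag : X.diag = x) (htrace : X.trace = (n : ℝ))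
    (hq : ∀ i, u i ⬝ᵥ (X *ᵥ u i) = 1) (hnonneg : ∀ e f, 0 ≤ X e f)
    {e f : Fin m} (hef : e ≠ f) (hg : g e = g f) : X e f = 0 := by
  set w := u (g e)
  have hw_idem : ∀ a, w a * w a = w a := fun a => by simp only [w, hu]; split_ifs <;> norm_num
  have hdiagSum : ∑ a, ∑ b, w a * w b * X a b = ∑ a, w a * w a * X a a := by
    calc ∑ a, ∑ b, w a * w b * X a b = w ⬝ᵥ (X *ᵥ w) := by
          simp only [dotProduct, mulVec, Finset.mul_sum]
          exact Finset.sum_congr rfl fun a _ => Finset.sum_congr rfl fun b _ => by ring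
      _ = w ⬝ᵥ x := by rw [hq, fiberIndicator_dotProduct_eq_one hu hpsd hdiag htrace hq]
      _ = ∑ a, w a * w a * X a a := by simp only [dotProduct, hw_idem, ← hdiag, diag]
  have hw_nonneg : ∀ a, 0 ≤ w a := fun a => by simp only [w, hu]; split_ifs <;> norm_num
  have hT : ∀ a b, 0 ≤ w a * w b * X a b := fun a b =>
    mul_nonneg (mul_nonneg (hw_nonneg a) (hw_nonneg b)) (hnonneg a b)
  have := offDiag_eq_zero_of_sum_eq_sum_diag hT hdiagSum hef
  simpa [w, hu, hg] using this

end FiberIndicators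

theorem zero_structure_redundant_general
    (n m : ℕ) (src tgt : Fin m → Fin n)
    (u v : Fin n → Fin m → ℝ)
    (hu : ∀ i e, u i e = if src e = i then 1 else 0)
    (hv : ∀ i e, v i e = if tgt e = i then 1 else 0)
    (x : Fin m → ℝ) (X : Matrix (Fin m) (Fin m) ℝ)
    (hpsd : (extM x X).PosSemidef)
    (hdiag : X.diag = x)
    (htrace : X.trace = (n : ℝ))
    (hTypeI : ∀ i, tip (vecMulVec (u i) (u i)) X = 1 ∧ tip (vecMulVec (v i) (v i)) X = 1)
    (hnonneg : ∀ e f, 0 ≤ X e f) :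
    ∀ e f : Fin m, e ≠ f → (src e = src f ∨ tgt e = tgt f) → X e f = 0 := by
  simp only [tip_vecMulVec_self] at hTypeI
  rintro e f hef (hsrc | htgt)
  · exact entry_eq_zero_of_same_fiber hu hpsd hdiag htrace (fun i => (hTypeI i).1) hnonneg hef hsrc
  · exact entry_eq_zero_of_same_fiber hv hpsd hdiag htrace (fun i => (hTypeI i).2) hnonneg hef htgt

/-- for a feasible point of `(SDP₁)` with entrywise nonnegative `X`, the
zero-structure constraints are redundant: `X_{ef} = 0` whenever the distinct arcs
`e` and `f` start at the same node or end at the same node. -/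
theorem zero_structure_redundant
    (n m : ℕ) (src tgt : Fin m → Fin n)
    (h_simple : ∀ e f : Fin m, src e = src f → tgt e = tgt f → e = f)
    (h_noloop : ∀ e : Fin m, src e ≠ tgt e)
    (u v : Fin n → Fin m → ℝ)
    (hu : ∀ i e, u i e = if src e = i then 1 else 0)
    (hv : ∀ i e, v i e = if tgt e = i then 1 else 0)
    (x : Fin m → ℝ) (X : Matrix (Fin m) (Fin m) ℝ)
    (hXsymm : X.IsSymm)
    (hpsd : (extM x X).PosSemidef)
    (hdiag : X.diag = x)
    (hallones : tip (Matrix.of fun _ _ => (1 : ℝ)) X = (n : ℝ) ^ 2)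
    (htrace : X.trace = (n : ℝ))
    (hTypeI : ∀ i, tip (vecMulVec (u i) (u i)) X = 1 ∧ tip (vecMulVec (v i) (v i)) X = 1)
    (hnonneg : ∀ e f, 0 ≤ X e f) :
    ∀ e f : Fin m, e ≠ f → (src e = src f ∨ tgt e = tgt f) → X e f = 0 :=
  zero_structure_redundant_general n m src tgt u v hu hv x X hpsd hdiag htrace hTypeI hnonneg
end
end

section
/- Let W ∈ ℝ^{(m+1)×(m+1−α)} be a matrix whose columns form a basis for R = Nul([−1_n, U; −1_n, V]), and let Z ∈ S^{m+1−α} be positive semidefinite with diag(W Z W^T) = W Z W^T e_0 and e_0^T W Z W^T e_0 = 1. Set Y = W Z W^T, let X ∈ S^m be the lower-right m×m block of Y and x = diag(X). Then Y = [[1, x^T],[x, X]] satisfies ⟨J_m, X⟩ = n², ⟨Ũ, Y⟩ = 0 and ⟨Ṽ, Y⟩ = 0, where Ũ = Σ_{i∈N} (−1; u_i)(−1; u_i)^T and Ṽ = Σ_{i∈N} (−1; v_i)(−1; v_i)^T; that is, Y is feasible for the relaxation (SDP_1). -/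
/-!
Every column of `W` lies in the kernel of `B`, so `B Y = B W Z Wᵀ = 0`: each vector `a = (-1; uᵢ)`
or `(-1; vᵢ)` satisfies `aᵀ Y = 0`, hence `⟨a aᵀ, Y⟩ = aᵀ Y a = 0`, which gives `⟨Ũ, Y⟩ = ⟨Ṽ, Y⟩ = 0`.
Since every arc has exactly one tail, `∑ᵢ (-1; uᵢ) = (-n; 1)`, so in every column of `Y` the
entries below the top one sum to `n` times it. Applied twice, with `Y₀₀ = 1` and the symmetry of
`Y`, this gives `⟨J, X⟩ = n²`; symmetry and `diag Y = Y e₀` give the block form `[[1, xᵀ], [x, X]]`.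
-/

open Matrix

noncomputable section

section TraceInnerProduct

variable {k l : ℕ}

theorem tip_eq_sum (M N : Matrix (Fin k) (Fin l) ℝ) : tip M N = ∑ i, ∑ j, M i j * N i j := by
  simp only [tip, trace, diag, mul_apply, transpose_apply]
  exact Finset.sum_comm

theorem tip_sum {ι : Type*} (s : Finset ι) (M : ι → Matrix (Fin k) (Fin l) ℝ)
    (N : Matrix (Fin k) (Fin l) ℝ) : tip (∑ i ∈ s, M i) N = ∑ i ∈ s, tip (M i) N := by
  simp only [tip, transpose_sum, Matrix.sum_mul, trace_sum]

theorem tip_vecMulVec (a : Fin k → ℝ) (b : Fin l → ℝ) (N : Matrix (Fin k) (Fin l) ℝ) :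
    tip (vecMulVec a b) N = a ᵥ* N ⬝ᵥ b := by
  simp only [tip_eq_sum, vecMulVec_apply, dotProduct, vecMul, Finset.sum_mul]
  rw [Finset.sum_comm]
  exact Finset.sum_congr rfl fun _ _ => Finset.sum_congr rfl fun _ _ => by ring

end TraceInnerProduct

theorem mul_eq_zero_of_span_cols_le_ker {R p q r : Type*} [CommSemiring R] [Fintype q]
    (B : Matrix p q R) (W : Matrix q r R)
    (h : Submodule.span R (Set.range fun j i => W i j) ≤ LinearMap.ker B.mulVecLin) :
    B * W = 0 := by
  ext i j
  have hcol : B *ᵥ (fun i => W i j) = 0 := h (Submodule.subset_span ⟨j, rfl⟩)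
  simpa [mulVec, dotProduct, mul_apply] using congrFun hcol i

theorem sum_fin_cons {M ι : Type*} [AddCommMonoid M] [Fintype ι] {m : ℕ} (a : ι → M)
    (v : ι → Fin m → M) : ∑ i, (Fin.cons (a i) (v i) : Fin (m + 1) → M) = Fin.cons (∑ i, a i) (∑ i, v i) := by
  ext c
  induction c using Fin.cases <;> simp [Finset.sum_apply]

theorem sum_incidence_rows {n m : ℕ} (src : Fin m → Fin n) (U : Fin n → Fin m → ℝ)
    (hU : ∀ i e, U i e = if src e = i then 1 else 0) : ∑ i, U i = 1 := by
  funext e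
  simp [Finset.sum_apply, hU]

theorem sum_cons_neg_one_incidence_rows {n m : ℕ} (src : Fin m → Fin n) (U : Fin n → Fin m → ℝ)
    (hU : ∀ i e, U i e = if src e = i then 1 else 0) :
    ∑ i, (Fin.cons (-1) (U i) : Fin (m + 1) → ℝ) = Fin.cons (-(n : ℝ)) 1 := by
  rw [sum_fin_cons, sum_incidence_rows src U hU]
  simp

theorem sum_succ_eq_of_cons_vecMul_eq_zero {m : ℕ} (Y : Matrix (Fin (m + 1)) (Fin (m + 1)) ℝ)
    (k : ℝ) (h : Fin.cons (-k) 1 ᵥ* Y = 0) (c : Fin (m + 1)) :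
    ∑ e : Fin m, Y e.succ c = k * Y 0 c := by
  have := congrFun h c
  simp only [vecMul, dotProduct, Fin.sum_univ_succ, Fin.cons_zero, Fin.cons_succ, Pi.one_apply,
    Pi.zero_apply, neg_mul, one_mul] at this
  linarith

section ExtendedMatrix

variable {m : ℕ} {Y : Matrix (Fin (m + 1)) (Fin (m + 1)) ℝ}

theorem eq_extM_diag_submatrix (hsymm : Y.IsSymm) (h00 : Y 0 0 = 1)
    (hdiag : ∀ i, Y i i = Y i 0) :
    Y = extM (Y.submatrix Fin.succ Fin.succ).diag (Y.submatrix Fin.succ Fin.succ) := by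
  ext i j
  induction i using Fin.cases <;> induction j using Fin.cases <;>
    simp [extM, h00, hdiag, hsymm.apply]

theorem sum_submatrix_succ_eq_sq (hsymm : Y.IsSymm) (h00 : Y 0 0 = 1) {k : ℝ}
    (hrow : ∀ c, ∑ e : Fin m, Y e.succ c = k * Y 0 c) :
    ∑ e : Fin m, ∑ f : Fin m, Y e.succ f.succ = k ^ 2 :=
  calc ∑ e : Fin m, ∑ f : Fin m, Y e.succ f.succ
      = ∑ f : Fin m, k * Y f.succ 0 := by
        rw [Finset.sum_comm]
        exact Finset.sum_congr rfl fun f _ => by rw [hrow, hsymm.apply]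
    _ = k ^ 2 := by rw [← Finset.mul_sum, hrow, h00]; ring

end ExtendedMatrix

theorem facially_reduced_point_feasible_general
    (n m : ℕ) (src : Fin m → Fin n)
    (U V : Matrix (Fin n) (Fin m) ℝ)
    (hU : ∀ i e, U i e = if src e = i then 1 else 0)
    (α : ℕ)
    (B : Matrix (Fin n ⊕ Fin n) (Fin (m + 1)) ℝ)
    (hBu : ∀ i, B (Sum.inl i) = Fin.cons (-1) (U i))
    (hBv : ∀ i, B (Sum.inr i) = Fin.cons (-1) (V i))
    (W : Matrix (Fin (m + 1)) (Fin (m + 1 - α)) ℝ)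
    (hWspan : Submodule.span ℝ (Set.range fun j (i : Fin (m + 1)) => W i j)
        = LinearMap.ker B.mulVecLin)
    (Z : Matrix (Fin (m + 1 - α)) (Fin (m + 1 - α)) ℝ) (hZ : Z.PosSemidef)
    (Y : Matrix (Fin (m + 1)) (Fin (m + 1)) ℝ) (hY : Y = W * Z * Wᵀ)
    (hdiag : Y.diag = Y.mulVec (Pi.single 0 1))
    (h00 : Pi.single (0 : Fin (m + 1)) (1 : ℝ) ⬝ᵥ Y.mulVec (Pi.single 0 1) = 1)
    (X : Matrix (Fin m) (Fin m) ℝ) (hX : ∀ e f, X e f = Y e.succ f.succ)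
    (x : Fin m → ℝ) (hx : x = X.diag)
    (Ut Vt : Matrix (Fin (m + 1)) (Fin (m + 1)) ℝ)
    (hUt : Ut = ∑ i : Fin n, vecMulVec (Fin.cons (-1) (U i)) (Fin.cons (-1) (U i)))
    (hVt : Vt = ∑ i : Fin n, vecMulVec (Fin.cons (-1) (V i)) (Fin.cons (-1) (V i))) :
    Y = extM x X ∧
      tip (Matrix.of fun _ _ => (1 : ℝ)) X = (n : ℝ) ^ 2 ∧
      tip Ut Y = 0 ∧ tip Vt Y = 0 := by
  have hBY : ∀ r, B r ᵥ* Y = 0 := by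
    intro r
    rw [← mul_apply_eq_vecMul, hY, ← Matrix.mul_assoc, ← Matrix.mul_assoc,
      mul_eq_zero_of_span_cols_le_ker B W hWspan.le, Matrix.zero_mul, Matrix.zero_mul]
    rfl
  have hsymm : Y.IsSymm := by
    have := (hZ.mul_mul_conjTranspose_same W).isHermitian
    rwa [conjTranspose_eq_transpose_of_trivial, ← hY] at this
  have hY00 : Y 0 0 = 1 := by simpa [mulVec_single, Pi.single_apply] using h00
  have hYdiag : ∀ i, Y i i = Y i 0 := fun i => by simpa [mulVec_single] using congrFun hdiag i
  have hrow : ∀ c, ∑ e : Fin m, Y e.succ c = n * Y 0 c := by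
    refine sum_succ_eq_of_cons_vecMul_eq_zero Y n ?_
    rw [← sum_cons_neg_one_incidence_rows src U hU, sum_vecMul]
    simp [← hBu, hBY]
  obtain rfl : X = Y.submatrix Fin.succ Fin.succ := Matrix.ext hX
  subst hx hUt hVt
  refine ⟨eq_extM_diag_submatrix hsymm hY00 hYdiag, ?_, ?_, ?_⟩
  · simpa [tip_eq_sum] using sum_submatrix_succ_eq_sq hsymm hY00 hrow
  · simp [tip_sum, tip_vecMulVec, ← hBu, hBY]
  · simp [tip_sum, tip_vecMulVec, ← hBv, hBY]

/-- if the columns of `W` form a basis of `R = Nul([-1ₙ, U; -1ₙ, V])` and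
`Z ⪰ 0` is feasible for `(SDP_{S1})`, then `Y = W Z Wᵀ` has the form `[[1,xᵀ],[x,X]]`
with `x = diag(X)` and satisfies `⟨J, X⟩ = n²` and `⟨Ũ, Y⟩ = ⟨Ṽ, Y⟩ = 0`; i.e., `Y` is
feasible for `(SDP₁)`. -/
theorem facially_reduced_point_feasible
    (n m : ℕ) (src tgt : Fin m → Fin n)
    (h_simple : ∀ e f : Fin m, src e = src f → tgt e = tgt f → e = f)
    (h_noloop : ∀ e : Fin m, src e ≠ tgt e)
    (U V : Matrix (Fin n) (Fin m) ℝ)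
    (hU : ∀ i e, U i e = if src e = i then 1 else 0)
    (hV : ∀ i e, V i e = if tgt e = i then 1 else 0)
    (α : ℕ) (hα : α = (Matrix.fromRows U V).rank)
    (B : Matrix (Fin n ⊕ Fin n) (Fin (m + 1)) ℝ)
    (hBu : ∀ i, B (Sum.inl i) = Fin.cons (-1) (U i))
    (hBv : ∀ i, B (Sum.inr i) = Fin.cons (-1) (V i))
    (W : Matrix (Fin (m + 1)) (Fin (m + 1 - α)) ℝ)
    (hWli : LinearIndependent ℝ (fun j (i : Fin (m + 1)) => W i j))
    (hWspan : Submodule.span ℝ (Set.range fun j (i : Fin (m + 1)) => W i j)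
        = LinearMap.ker B.mulVecLin)
    (Z : Matrix (Fin (m + 1 - α)) (Fin (m + 1 - α)) ℝ) (hZ : Z.PosSemidef)
    (Y : Matrix (Fin (m + 1)) (Fin (m + 1)) ℝ) (hY : Y = W * Z * Wᵀ)
    (hdiag : Y.diag = Y.mulVec (Pi.single 0 1))
    (h00 : Pi.single (0 : Fin (m + 1)) (1 : ℝ) ⬝ᵥ Y.mulVec (Pi.single 0 1) = 1)
    (X : Matrix (Fin m) (Fin m) ℝ) (hX : ∀ e f, X e f = Y e.succ f.succ)
    (x : Fin m → ℝ) (hx : x = X.diag)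
    (Ut Vt : Matrix (Fin (m + 1)) (Fin (m + 1)) ℝ)
    (hUt : Ut = ∑ i : Fin n, vecMulVec (Fin.cons (-1) (U i)) (Fin.cons (-1) (U i)))
    (hVt : Vt = ∑ i : Fin n, vecMulVec (Fin.cons (-1) (V i)) (Fin.cons (-1) (V i))) :
    Y = extM x X ∧
      tip (Matrix.of fun _ _ => (1 : ℝ)) X = (n : ℝ) ^ 2 ∧
      tip Ut Y = 0 ∧ tip Vt Y = 0 :=
  facially_reduced_point_feasible_general n m src U V hU α B hBu hBv W hWspan Z hZ Y hY hdiag h00 X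
    hX x hx Ut Vt hUt hVt
end
end

section
/- Assume P ≠ ∅ and every arc of G is used by at least one cycle cover. Let W ∈ ℝ^{(m+1)×(m+1−α)} be a matrix whose columns form a basis for R = Nul([−1_n, U; −1_n, V]). Then there exists a positive definite matrix Z ∈ S^{m+1−α} (Z ≻ 0) such that diag(W Z W^T) = W Z W^T e_0 and e_0^T W Z W^T e_0 = 1; that is, the facially reduced relaxation (SDP_{S1}) has a Slater feasible point. -/
/-!
If `q ≥ 0` has all in- and out-sums equal to `1`, then `M = U diag(q) Vᵀ` is doubly stochastic.
Birkhoff's theorem writes `M` as a convex combination of permutation matrices, and a permutation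
of positive weight only uses arcs of `G` (as `M` vanishes off the arcs), so it is a cycle cover:
`q` is a convex combination of cycle covers. A positive `y ∈ R` is a multiple of such a `(1; q)`,
and since every arc lies on a cycle cover, adding a large multiple of a sum of lifted cycle covers
makes any `y ∈ R` positive; so the `(1; x)`, `x ∈ P`, span `R`. Writing `(1; x) = W c_x`, the
`c_x` span (as `W` is injective), so `Z = |P|⁻¹ Σ c_x c_xᵀ` is positive definite, and
`W Z Wᵀ = |P|⁻¹ Σ (1; x)(1; x)ᵀ` meets the constraints because each `x` is a `0/1` vector.
-/

open Matrix Finset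

theorem exists_posDef_mul_mul_transpose_eq_sum_vecMulVec {ι κ ρ : Type*} [Fintype ι]
    [Fintype κ] [Fintype ρ] (W : Matrix ι κ ℝ) (hW : Function.Injective W.mulVec)
    (v : ρ → ι → ℝ) (hv : Submodule.span ℝ (Set.range v) = LinearMap.range W.mulVecLin) :
    ∃ Z : Matrix κ κ ℝ, Z.PosDef ∧ W * Z * Wᵀ = ∑ k, vecMulVec (v k) (v k) := by
  obtain ⟨C, hC⟩ : ∃ C : Matrix ρ κ ℝ, ∀ k, W *ᵥ C k = v k := by
    have hmem : ∀ k, v k ∈ LinearMap.range W.mulVecLin := fun k =>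
      hv ▸ Submodule.subset_span (Set.mem_range_self k)
    choose C hC using hmem
    exact ⟨of C, hC⟩
  have hWC : W * Cᵀ = (of v)ᵀ := by
    ext i k
    simp [← hC k, mul_apply, mulVec, dotProduct]
  have hC_inj : Function.Injective C.mulVec := by
    refine (injective_iff_map_eq_zero C.mulVecLin).2 fun z hz => ?_
    obtain ⟨a, ha⟩ : W *ᵥ z ∈ LinearMap.range (W * Cᵀ).mulVecLin := by
      rw [hWC, range_mulVecLin]
      show W *ᵥ z ∈ Submodule.span ℝ (Set.range v)
      rw [hv]
      exact ⟨z, rfl⟩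
    rw [mulVecLin_apply, ← mulVec_mulVec] at ha
    rw [mulVecLin_apply] at hz
    have hz_eq : Cᵀ *ᵥ a = z := hW ha
    refine dotProduct_self_eq_zero.1 ?_
    calc z ⬝ᵥ z = (Cᵀ *ᵥ a) ⬝ᵥ z := by rw [hz_eq]
      _ = a ⬝ᵥ (C *ᵥ z) := by rw [mulVec_transpose, dotProduct_mulVec]
      _ = 0 := by rw [hz, dotProduct_zero]
  refine ⟨Cᵀ * C, ?_, ?_⟩
  · simpa using PosDef.conjTranspose_mul_self C hC_inj
  · calc W * (Cᵀ * C) * Wᵀ = (W * Cᵀ) * (W * Cᵀ)ᵀ := by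
          simp only [transpose_mul, transpose_transpose, Matrix.mul_assoc]
      _ = _ := by
        rw [hWC]
        ext i j
        simp [mul_apply, vecMulVec_apply, Matrix.sum_apply]

section CycleCover

variable {N E : Type*} [DecidableEq N]

def incidenceMatrix (f : E → N) : Matrix N E ℝ := of fun i e => if f e = i then 1 else 0

lemma one_vecMul_incidenceMatrix [Fintype N] (f : E → N) : 1 ᵥ* incidenceMatrix f = 1 := by
  ext e; simp [incidenceMatrix, vecMul, dotProduct]

variable [Fintype E]

lemma incidenceMatrix_mulVec_apply (f : E → N) (x : E → ℝ) (i : N) :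
    (incidenceMatrix f *ᵥ x) i = ∑ e with f e = i, x e := by
  simp [incidenceMatrix, mulVec, dotProduct, sum_filter]

def cycleCovers (src tgt : E → N) : Set (E → ℝ) :=
  {x | (∀ e, x e = 0 ∨ x e = 1) ∧
    incidenceMatrix src *ᵥ x = 1 ∧ incidenceMatrix tgt *ᵥ x = 1}

lemma cycleCovers_finite (src tgt : E → N) : (cycleCovers src tgt).Finite :=
  (Set.Finite.pi fun _ => Set.toFinite ({0, 1} : Set ℝ)).subset fun _ hx e _ => hx.1 e

def permCover (src tgt : E → N) (σ : Equiv.Perm N) (e : E) : ℝ :=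
  if σ (src e) = tgt e then 1 else 0

variable {src tgt : E → N}

lemma filter_src_tgt_eq_singleton (hsimple : ∀ e f, src e = src f → tgt e = tgt f → e = f)
    (e : E) : ({f | src f = src e ∧ tgt f = tgt e} : Finset E) = {e} := by
  ext f
  simp only [mem_filter, mem_univ, true_and, mem_singleton]
  exact ⟨fun h => hsimple f e h.1 h.2, fun h => h ▸ ⟨rfl, rfl⟩⟩

lemma card_filter_src_tgt_eq_one (hsimple : ∀ e f, src e = src f → tgt e = tgt f → e = f)
    {i j : N} (hij : ∃ e, src e = i ∧ tgt e = j) : #{e | src e = i ∧ tgt e = j} = 1 := by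
  obtain ⟨e, rfl, rfl⟩ := hij
  rw [filter_src_tgt_eq_singleton hsimple, card_singleton]

lemma permCover_mem_cycleCovers (hsimple : ∀ e f, src e = src f → tgt e = tgt f → e = f)
    {σ : Equiv.Perm N} (hσ : ∀ i, ∃ e, src e = i ∧ tgt e = σ i) :
    permCover src tgt σ ∈ cycleCovers src tgt := by
  refine ⟨fun e => ?_, funext fun i => ?_, funext fun j => ?_⟩
  · by_cases h : σ (src e) = tgt e <;> simp [permCover, h]
  · simp only [incidenceMatrix_mulVec_apply, permCover]
    rw [sum_boole, filter_filter, Pi.one_apply, Nat.cast_eq_one,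
      ← card_filter_src_tgt_eq_one hsimple (hσ i)]
    congr 1
    exact filter_congr fun e _ => by grind
  · simp only [incidenceMatrix_mulVec_apply, permCover]
    rw [sum_boole, filter_filter, Pi.one_apply, Nat.cast_eq_one,
      ← card_filter_src_tgt_eq_one hsimple (hσ (σ.symm j))]
    congr 1
    exact filter_congr fun e _ => by grind

variable [DecidableEq E]

lemma incidenceMatrix_mul_diagonal_mul_transpose_apply (q : E → ℝ) (i j : N) :
    (incidenceMatrix src * diagonal q * (incidenceMatrix tgt)ᵀ) i j
      = ∑ e with src e = i ∧ tgt e = j, q e := by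
  rw [mul_apply, sum_filter]
  refine sum_congr rfl fun e _ => ?_
  simp only [mul_diagonal, transpose_apply, incidenceMatrix, of_apply, ite_and]
  split_ifs <;> simp

variable [Fintype N]

lemma incidenceMatrix_mul_diagonal_mul_transpose_mem_doublyStochastic {q : E → ℝ} (hq : 0 ≤ q)
    (hsrc : incidenceMatrix src *ᵥ q = 1) (htgt : incidenceMatrix tgt *ᵥ q = 1) :
    incidenceMatrix src * diagonal q * (incidenceMatrix tgt)ᵀ ∈ doublyStochastic ℝ N := by
  refine mem_doublyStochastic.2 ⟨fun i j => ?_, ?_, ?_⟩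
  · rw [incidenceMatrix_mul_diagonal_mul_transpose_apply]
    exact sum_nonneg fun e _ => hq e
  · have hdiag : diagonal q *ᵥ 1 = q := by ext; simp [mulVec_diagonal]
    rw [← mulVec_mulVec, ← mulVec_mulVec, mulVec_transpose, one_vecMul_incidenceMatrix, hdiag,
      hsrc]
  · have hdiag : 1 ᵥ* diagonal q = q := by ext; simp [vecMul_diagonal]
    rw [← vecMul_vecMul, ← vecMul_vecMul, one_vecMul_incidenceMatrix, hdiag, vecMul_transpose,
      htgt]

theorem mem_convexHull_cycleCovers (hsimple : ∀ e f, src e = src f → tgt e = tgt f → e = f)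
    {q : E → ℝ} (hq : 0 ≤ q) (hsrc : incidenceMatrix src *ᵥ q = 1)
    (htgt : incidenceMatrix tgt *ᵥ q = 1) : q ∈ convexHull ℝ (cycleCovers src tgt) := by
  obtain ⟨w, hw0, hw1, hwM⟩ := exists_eq_sum_perm_of_mem_doublyStochastic
    (incidenceMatrix_mul_diagonal_mul_transpose_mem_doublyStochastic hq hsrc htgt)
  have hM : ∀ i j,
      ∑ e with src e = i ∧ tgt e = j, q e = ∑ σ, w σ * if σ i = j then 1 else 0 := by
    intro i j
    rw [← incidenceMatrix_mul_diagonal_mul_transpose_apply, ← hwM, Matrix.sum_apply]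
    simp
  have hq_eq : q = ∑ᶠ σ, w σ • permCover src tgt σ := by
    ext e
    have hMe := hM (src e) (tgt e)
    rw [filter_src_tgt_eq_singleton hsimple, sum_singleton] at hMe
    simp [finsum_eq_sum_of_fintype, permCover, hMe]
  have hfollow : ∀ σ, w σ ≠ 0 → ∀ i, ∃ e, src e = i ∧ tgt e = σ i := by
    intro σ hσ i
    have hpos : 0 < ∑ e with src e = i ∧ tgt e = σ i, q e := by
      rw [hM]
      calc 0 < w σ := lt_of_le_of_ne (hw0 σ) (Ne.symm hσ)
        _ = w σ * if σ i = σ i then 1 else 0 := by simp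
        _ ≤ ∑ τ, w τ * if τ i = σ i then 1 else 0 :=
          single_le_sum (f := fun τ => w τ * if τ i = σ i then 1 else 0)
            (fun τ _ => mul_nonneg (hw0 τ) (by split_ifs <;> simp)) (mem_univ σ)
    obtain ⟨e, he, -⟩ := exists_ne_zero_of_sum_ne_zero hpos.ne'
    exact ⟨e, by simpa using he⟩
  rw [hq_eq]
  exact (convex_convexHull ℝ _).finsum_mem hw0 (by rwa [finsum_eq_sum_of_fintype])
    fun σ hσ => subset_convexHull ℝ _ (permCover_mem_cycleCovers hsimple (hfollow σ hσ))

end CycleCover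

section Homogenization

variable {n m : ℕ}

def homogenize (x : Fin m → ℝ) : Fin (m + 1) → ℝ := Fin.cons 1 x

@[simp] lemma homogenize_zero (x : Fin m → ℝ) : homogenize x 0 = 1 := rfl

@[simp] lemma homogenize_succ (x : Fin m → ℝ) (e : Fin m) : homogenize x e.succ = x e := rfl

lemma homogenize_mul_self {x : Fin m → ℝ} (hx : ∀ e, x e = 0 ∨ x e = 1) (i : Fin (m + 1)) :
    homogenize x i * homogenize x i = homogenize x i := by
  cases i using Fin.cases with
  | zero => simp
  | succ e => rcases hx e with h | h <;> simp [h]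

lemma homogenize_mem_span_image_of_mem_convexHull {s : Set (Fin m → ℝ)} {x : Fin m → ℝ}
    (hx : x ∈ convexHull ℝ s) : homogenize x ∈ Submodule.span ℝ (homogenize '' s) := by
  set t : Set (Fin m → ℝ) := homogenize ⁻¹' Submodule.span ℝ (homogenize '' s)
  have hst : s ⊆ t := fun x hx => Submodule.subset_span (Set.mem_image_of_mem homogenize hx)
  have hconv : Convex ℝ t := by
    intro x hx y hy a b _ _ hab
    have hlin : homogenize (a • x + b • y) = a • homogenize x + b • homogenize y := by
      ext i
      cases i using Fin.cases with
      | zero => simp [hab]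
      | succ e => simp
    show homogenize (a • x + b • y) ∈ Submodule.span ℝ (homogenize '' s)
    rw [hlin]
    exact add_mem (Submodule.smul_mem _ a hx) (Submodule.smul_mem _ b hy)
  exact convexHull_min hst hconv hx

def constraintMatrix (src tgt : Fin m → Fin n) : Matrix (Fin n ⊕ Fin n) (Fin (m + 1)) ℝ :=
  of <| Sum.elim (fun i => Fin.cons (-1) (incidenceMatrix src i))
    fun i => Fin.cons (-1) (incidenceMatrix tgt i)

variable {src tgt : Fin m → Fin n}

lemma constraintMatrix_mulVec_eq_zero_iff (y : Fin (m + 1) → ℝ) :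
    constraintMatrix src tgt *ᵥ y = 0 ↔
      incidenceMatrix src *ᵥ Fin.tail y = y 0 • 1 ∧
        incidenceMatrix tgt *ᵥ Fin.tail y = y 0 • 1 := by
  have hrow : ∀ r : Fin m → ℝ,
      (Fin.cons (-1) r : Fin (m + 1) → ℝ) ⬝ᵥ y = -y 0 + r ⬝ᵥ Fin.tail y :=
    fun r => by simp [dotProduct, Fin.sum_univ_succ, Fin.tail]
  simp only [funext_iff, Sum.forall, mulVec, constraintMatrix, of_apply, Sum.elim_inl,
    Sum.elim_inr, hrow, Pi.zero_apply, neg_add_eq_zero, Pi.smul_apply, Pi.one_apply,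
    smul_eq_mul, mul_one]
  simp only [eq_comm]

lemma nonneg_of_mem_cycleCovers {x : Fin m → ℝ} (hx : x ∈ cycleCovers src tgt) : 0 ≤ x :=
  fun e => by rcases hx.1 e with h | h <;> simp [h]

lemma span_homogenize_cycleCovers_le_ker :
    Submodule.span ℝ (homogenize '' cycleCovers src tgt) ≤
      LinearMap.ker (constraintMatrix src tgt).mulVecLin := by
  rw [Submodule.span_le]
  rintro _ ⟨x, ⟨-, hsrc, htgt⟩, rfl⟩
  simp only [SetLike.mem_coe, LinearMap.mem_ker, mulVecLin_apply,
    constraintMatrix_mulVec_eq_zero_iff, homogenize_zero, one_smul]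
  exact ⟨hsrc, htgt⟩

lemma mem_span_homogenize_cycleCovers_of_nonneg
    (hsimple : ∀ e f, src e = src f → tgt e = tgt f → e = f) {y : Fin (m + 1) → ℝ}
    (hy : constraintMatrix src tgt *ᵥ y = 0) (hy0 : 0 < y 0) (hy_nonneg : 0 ≤ y) :
    y ∈ Submodule.span ℝ (homogenize '' cycleCovers src tgt) := by
  obtain ⟨hsrc, htgt⟩ := (constraintMatrix_mulVec_eq_zero_iff y).1 hy
  have hnormalize : ∀ f : Fin m → Fin n, incidenceMatrix f *ᵥ Fin.tail y = y 0 • 1 →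
      incidenceMatrix f *ᵥ ((y 0)⁻¹ • Fin.tail y) = 1 := fun f hf => by
    rw [mulVec_smul, hf, smul_smul, inv_mul_cancel₀ hy0.ne', one_smul]
  have hq : (y 0)⁻¹ • Fin.tail y ∈ convexHull ℝ (cycleCovers src tgt) :=
    mem_convexHull_cycleCovers hsimple
      (smul_nonneg (inv_nonneg.2 hy0.le) fun e => hy_nonneg e.succ)
      (hnormalize src hsrc) (hnormalize tgt htgt)
  have hy_eq : y = y 0 • homogenize ((y 0)⁻¹ • Fin.tail y) := by
    ext i
    cases i using Fin.cases with
    | zero => simp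
    | succ e => simp [Fin.tail, hy0.ne']
  rw [hy_eq]
  exact Submodule.smul_mem _ _ (homogenize_mem_span_image_of_mem_convexHull hq)

lemma exists_one_le_mem_span_homogenize_cycleCovers (hne : (cycleCovers src tgt).Nonempty)
    (hused : ∀ e, ∃ x ∈ cycleCovers src tgt, x e = 1) :
    ∃ p ∈ Submodule.span ℝ (homogenize '' cycleCovers src tgt), ∀ i, 1 ≤ p i := by
  obtain ⟨x₀, hx₀⟩ := hne
  choose x hx hxe using hused
  refine ⟨homogenize x₀ + ∑ f, homogenize (x f),
    add_mem (Submodule.subset_span ⟨x₀, hx₀, rfl⟩)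
      (sum_mem fun f _ => Submodule.subset_span ⟨x f, hx f, rfl⟩), fun i => ?_⟩
  cases i using Fin.cases with
  | zero => simp
  | succ e =>
    have hsum : 1 ≤ ∑ f, x f e := hxe e ▸
      single_le_sum (fun f _ => nonneg_of_mem_cycleCovers (hx f) e) (mem_univ e)
    simpa [Finset.sum_apply] using
      add_le_add (nonneg_of_mem_cycleCovers hx₀ e) hsum

theorem span_homogenize_cycleCovers_eq_ker
    (hsimple : ∀ e f, src e = src f → tgt e = tgt f → e = f)
    (hne : (cycleCovers src tgt).Nonempty) (hused : ∀ e, ∃ x ∈ cycleCovers src tgt, x e = 1) :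
    Submodule.span ℝ (homogenize '' cycleCovers src tgt) =
      LinearMap.ker (constraintMatrix src tgt).mulVecLin := by
  refine le_antisymm span_homogenize_cycleCovers_le_ker fun y hy => ?_
  obtain ⟨p, hp, hp_one⟩ := exists_one_le_mem_span_homogenize_cycleCovers hne hused
  have hpos : ∀ i, 0 < (y + (‖y‖ + 1) • p) i := fun i => by
    have hyi : -‖y‖ ≤ y i := neg_le_of_abs_le (norm_le_pi_norm y i)
    have : ‖y‖ + 1 ≤ (‖y‖ + 1) * p i := le_mul_of_one_le_right (by positivity) (hp_one i)
    simp only [Pi.add_apply, Pi.smul_apply, smul_eq_mul]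
    linarith
  have hker : y + (‖y‖ + 1) • p ∈ LinearMap.ker (constraintMatrix src tgt).mulVecLin :=
    add_mem hy (Submodule.smul_mem _ _ (span_homogenize_cycleCovers_le_ker hp))
  rw [LinearMap.mem_ker, mulVecLin_apply] at hker
  have := mem_span_homogenize_cycleCovers_of_nonneg hsimple hker (hpos 0) fun i => (hpos i).le
  simpa using sub_mem this (Submodule.smul_mem _ (‖y‖ + 1) hp)

end Homogenization

theorem slater_point_exists_general
    (n m : ℕ) (src tgt : Fin m → Fin n)
    (h_simple : ∀ e f : Fin m, src e = src f → tgt e = tgt f → e = f)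
    (U V : Matrix (Fin n) (Fin m) ℝ)
    (hU : ∀ i e, U i e = if src e = i then 1 else 0)
    (hV : ∀ i e, V i e = if tgt e = i then 1 else 0)
    (P : Set (Fin m → ℝ))
    (hP : P = {x | (∀ e, x e = 0 ∨ x e = 1) ∧ U.mulVec x = 1 ∧ V.mulVec x = 1})
    (hPne : P.Nonempty)
    (hused : ∀ e : Fin m, ∃ x ∈ P, x e = 1)
    (α : ℕ)
    (B : Matrix (Fin n ⊕ Fin n) (Fin (m + 1)) ℝ)
    (hBu : ∀ i, B (Sum.inl i) = Fin.cons (-1) (U i))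
    (hBv : ∀ i, B (Sum.inr i) = Fin.cons (-1) (V i))
    (W : Matrix (Fin (m + 1)) (Fin (m + 1 - α)) ℝ)
    (hWli : LinearIndependent ℝ (fun j (i : Fin (m + 1)) => W i j))
    (hWspan : Submodule.span ℝ (Set.range fun j (i : Fin (m + 1)) => W i j)
        = LinearMap.ker B.mulVecLin) :
    ∃ Z : Matrix (Fin (m + 1 - α)) (Fin (m + 1 - α)) ℝ, Z.PosDef ∧
      (W * Z * Wᵀ).diag = (W * Z * Wᵀ).mulVec (Pi.single 0 1) ∧
      Pi.single (0 : Fin (m + 1)) (1 : ℝ) ⬝ᵥ (W * Z * Wᵀ).mulVec (Pi.single 0 1) = 1 := by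
  obtain rfl : U = incidenceMatrix src := Matrix.ext hU
  obtain rfl : V = incidenceMatrix tgt := Matrix.ext hV
  obtain rfl : B = constraintMatrix src tgt := by
    ext (i | i) j <;> simp [hBu, hBv, constraintMatrix]
  obtain rfl : P = cycleCovers src tgt := hP
  have : Fintype (cycleCovers src tgt) := (cycleCovers_finite src tgt).fintype
  obtain ⟨Z, hZ, hWZ⟩ := exists_posDef_mul_mul_transpose_eq_sum_vecMulVec W
    (mulVec_injective_iff.2 hWli) (fun x : cycleCovers src tgt => homogenize x) (by
      rw [range_mulVecLin, ← Set.image_eq_range,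
        span_homogenize_cycleCovers_eq_ker h_simple hPne hused, ← hWspan]
      rfl)
  have hN : 0 < Fintype.card (cycleCovers src tgt) := Fintype.card_pos_iff.2 hPne.to_subtype
  set c : ℝ := (Fintype.card (cycleCovers src tgt) : ℝ)⁻¹
  have hX : ∀ i j, (W * (c • Z) * Wᵀ) i j = c * ∑ x : cycleCovers src tgt,
      homogenize x i * homogenize x j := fun i j => by
    simp [Matrix.mul_smul, Matrix.smul_mul, hWZ, Matrix.sum_apply, vecMulVec_apply]
  refine ⟨c • Z, hZ.smul (inv_pos.2 (Nat.cast_pos.2 hN)), ?_, ?_⟩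
  · ext i
    rw [diag_apply, mulVec_single_one, col_apply, hX, hX]
    simp only [homogenize_zero, mul_one]
    exact congrArg _ (sum_congr rfl fun x _ => homogenize_mul_self x.2.1 i)
  · rw [mulVec_single_one, single_one_dotProduct, col_apply, hX]
    simp only [homogenize_zero, mul_one, sum_const, card_univ, nsmul_eq_mul]
    exact inv_mul_cancel₀ (Nat.cast_pos.2 hN).ne'

/-- assuming `P ≠ ∅` and that every arc is used by some cycle cover, if the
columns of `W` form a basis of `R = Nul([-1ₙ, U; -1ₙ, V])`, then there exists a positive
definite `Z` with `diag(W Z Wᵀ) = W Z Wᵀ e₀` and `e₀ᵀ W Z Wᵀ e₀ = 1`; that is, the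
facially reduced relaxation `(SDP_{S1})` has a Slater feasible point. -/
theorem slater_point_exists
    (n m : ℕ) (src tgt : Fin m → Fin n)
    (h_simple : ∀ e f : Fin m, src e = src f → tgt e = tgt f → e = f)
    (h_noloop : ∀ e : Fin m, src e ≠ tgt e)
    (U V : Matrix (Fin n) (Fin m) ℝ)
    (hU : ∀ i e, U i e = if src e = i then 1 else 0)
    (hV : ∀ i e, V i e = if tgt e = i then 1 else 0)
    (P : Set (Fin m → ℝ))
    (hP : P = {x | (∀ e, x e = 0 ∨ x e = 1) ∧ U.mulVec x = 1 ∧ V.mulVec x = 1})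
    (hPne : P.Nonempty)
    (hused : ∀ e : Fin m, ∃ x ∈ P, x e = 1)
    (α : ℕ) (hα : α = (Matrix.fromRows U V).rank)
    (B : Matrix (Fin n ⊕ Fin n) (Fin (m + 1)) ℝ)
    (hBu : ∀ i, B (Sum.inl i) = Fin.cons (-1) (U i))
    (hBv : ∀ i, B (Sum.inr i) = Fin.cons (-1) (V i))
    (W : Matrix (Fin (m + 1)) (Fin (m + 1 - α)) ℝ)
    (hWli : LinearIndependent ℝ (fun j (i : Fin (m + 1)) => W i j))
    (hWspan : Submodule.span ℝ (Set.range fun j (i : Fin (m + 1)) => W i j)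
        = LinearMap.ker B.mulVecLin) :
    ∃ Z : Matrix (Fin (m + 1 - α)) (Fin (m + 1 - α)) ℝ, Z.PosDef ∧
      (W * Z * Wᵀ).diag = (W * Z * Wᵀ).mulVec (Pi.single 0 1) ∧
      Pi.single (0 : Fin (m + 1)) (1 : ℝ) ⬝ᵥ (W * Z * Wᵀ).mulVec (Pi.single 0 1) = 1 :=
  slater_point_exists_general n m src tgt h_simple U V hU hV P hP hPne hused α B hBu hBv W hWli
    hWspan
end
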